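/- Let $\mu$ be a positive measure on $\mathbb{D}$, $0<q<\infty$, $\gamma\ge0$, $n\ge1$. Suppose that for some $h\in L^q(\mu)$, for every $a\in\mathbb{D}$ and every $0\le k\le n$ the function $f_a\sigma_a^k$ (with $f_a(w)=((1-|a|^2)/(1-\bar a w)^2)^{\gamma}$, $\sigma_a(w)=(a-w)/(1-\bar a w)$) satisfies $|S^n_{\vec u,\tau}(f_a\sigma_a^k)(z)|\le h(z)$ $\mu$-a.e. Assume further the derivative estimate $|g^{(i)}(w)|\le C\|g\|_X/(1-|w|^2)^{i+\gamma}$ holds for the functions $f_a\sigma_a^k$, which lie in the unit ball of $X$. Then $Q_n(z)=\frac{|u_n(z)|}{(1-|\tau(z)|^2)^{n+\gamma}}$ belongs to $L^q(\mu)$, and by downward induction every $Q_k(z)=\frac{|u_k(z)|}{(1-|\tau(z)|^2)^{k+\gamma}}$, $0\le k\le n$, belongs to $L^q(\mu)$. -/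

import Mathlib

/-!
Fix `z` and put `b = τ z`. The test function `f_b σ_b^k` vanishes to order exactly `k` at `b`,
with `k`-th derivative of modulus `k! / (1 - |b|²)^(k + γ)` there, so in
`S(f_b σ_b^k)(z) = ∑ᵢ uᵢ(z) (f_b σ_b^k)⁽ⁱ⁾(b)` the terms `i < k` drop out and the terms `i > k`
are bounded by `C Qᵢ(z)`. Hence `Qₖ ≤ k! Qₖ ≤ h + C ∑_{k<i≤n} Qᵢ` a.e., and `Qₖ ∈ L^q(μ)` follows
by downward induction on `k`. The domination hypothesis holds a.e. for each fixed `a`, while we need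
it at the `z`-dependent point `a = τ z`: it suffices on a countable dense set of `a`, since the
left-hand side depends continuously on `a` (locally uniform convergence of holomorphic functions
carries over to their derivatives).
-/

open Metric Finset MeasureTheory ComplexConjugate Filter Topology
open scoped Nat ENNReal

theorem ContinuousOn.tendstoLocallyUniformlyOn_nhdsWithin {X α E : Type*} [TopologicalSpace X]
    [TopologicalSpace α] [LocallyCompactSpace α] [UniformSpace E] {F : X → α → E} {s : Set X}
    {U : Set α} (hF : ContinuousOn ↿F (s ×ˢ U)) (hU : IsOpen U) {q : X}
    (hq : q ∈ s) : TendstoLocallyUniformlyOn F (F q) (𝓝[s] q) U := by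
  rw [tendstoLocallyUniformlyOn_iff_forall_isCompact hU]
  intro K hKU hK v hv
  obtain ⟨t, ht, htv⟩ := hK.mem_uniformity_of_prod (hF.mono (Set.prod_mono subset_rfl hKU)) hq
    (tendsto_swap_uniformity hv)
  filter_upwards [ht] with p hp x hx
  exact htv p hp x hx

section ParametricHolomorphic

variable {E : Type*} [NormedAddCommGroup E] [NormedSpace ℂ E] [CompleteSpace E] {U : Set ℂ}

theorem TendstoLocallyUniformlyOn.iteratedDeriv {ι : Type*} {l : Filter ι} {F : ι → ℂ → E}
    {f : ℂ → E} (hU : IsOpen U) (hF : ∀ᶠ a in l, DifferentiableOn ℂ (F a) U)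
    (hf : TendstoLocallyUniformlyOn F f l U) (i : ℕ) :
    TendstoLocallyUniformlyOn (fun a => iteratedDeriv i (F a)) (iteratedDeriv i f) l U := by
  induction i generalizing F f with
  | zero => simpa only [iteratedDeriv_zero] using hf
  | succ i ih =>
    simpa only [iteratedDeriv_succ'] using
      ih (hF.mono fun a ha => ha.deriv hU) (hf.deriv hF hU)

theorem ContinuousOn.continuousOn_iteratedDeriv_apply {X : Type*} [TopologicalSpace X]
    {F : X → ℂ → E} {s : Set X} (hF : ContinuousOn ↿F (s ×ˢ U)) (hU : IsOpen U)
    (hdiff : ∀ a ∈ s, DifferentiableOn ℂ (F a) U) (i : ℕ) {w : ℂ} (hw : w ∈ U) :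
    ContinuousOn (fun a => iteratedDeriv i (F a) w) s := fun _ hq =>
  (TendstoLocallyUniformlyOn.iteratedDeriv hU (eventually_mem_nhdsWithin.mono hdiff)
    (hF.tendstoLocallyUniformlyOn_nhdsWithin hU hq) i).tendsto_at hw

end ParametricHolomorphic

theorem ae_forall_le_of_continuousOn {X Ω : Type*} [TopologicalSpace X]
    [TopologicalSpace.PseudoMetrizableSpace X] [TopologicalSpace.SeparableSpace X]
    [MeasurableSpace Ω] {μ : Measure Ω} {s : Set X} {F : X → Ω → ℝ} {h : Ω → ℝ}
    (hF : ∀ᵐ z ∂μ, ContinuousOn (F · z) s) (hle : ∀ a ∈ s, ∀ᵐ z ∂μ, F a z ≤ h z) :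
    ∀ᵐ z ∂μ, ∀ a ∈ s, F a z ≤ h z := by
  obtain ⟨t, hts, htc, hst⟩ :=
    (TopologicalSpace.IsSeparable.of_separableSpace s).exists_countable_dense_subset
  have ht : ∀ᵐ z ∂μ, ∀ a ∈ t, F a z ≤ h z := (ae_ball_iff htc).2 fun a ha => hle a (hts ha)
  filter_upwards [hF, ht] with z hzF hzt a ha
  exact ContinuousWithinAt.closure_le (f := (F · z)) (hst ha) ((hzF a ha).mono hts)
    continuousWithinAt_const hzt

theorem norm_mul_le_of_eq_zero_of_lt {R : Type*} [SeminormedRing R] {u d : ℕ → R} {c : ℕ → ℝ}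
    {k n : ℕ} (hkn : k ≤ n) (hlow : ∀ i < k, d i = 0) (hhigh : ∀ i ∈ Ioc k n, ‖d i‖ ≤ c i) :
    ‖u k * d k‖ ≤ ‖∑ i ∈ range (n + 1), u i * d i‖ + ∑ i ∈ Ioc k n, ‖u i‖ * c i := by
  have hsplit : ∑ i ∈ range (n + 1), u i * d i = u k * d k + ∑ i ∈ Ioc k n, u i * d i := by
    rw [← sum_range_add_sum_Ico _ (by omega : k ≤ n + 1), sum_eq_sum_Ico_succ_bot (by omega),
      sum_eq_zero fun i hi => by rw [hlow i (mem_range.1 hi), mul_zero], zero_add]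
    congr 2
    ext i
    simp only [mem_Ico, mem_Ioc]
    omega
  calc ‖u k * d k‖ = ‖∑ i ∈ range (n + 1), u i * d i - ∑ i ∈ Ioc k n, u i * d i‖ := by
        rw [hsplit, add_sub_cancel_right]
    _ ≤ ‖∑ i ∈ range (n + 1), u i * d i‖ + ‖∑ i ∈ Ioc k n, u i * d i‖ := norm_sub_le _ _
    _ ≤ ‖∑ i ∈ range (n + 1), u i * d i‖ + ∑ i ∈ Ioc k n, ‖u i‖ * c i := by
        gcongr
        refine (norm_sum_le _ _).trans (sum_le_sum fun i hi => (norm_mul_le _ _).trans ?_)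
        gcongr
        exact hhigh i hi

theorem memLp_of_norm_le_norm_add_sum_Ioc {Ω : Type*} [MeasurableSpace Ω] {μ : Measure Ω}
    {p : ℝ≥0∞} {n : ℕ} {Q : ℕ → Ω → ℝ} {h : Ω → ℝ} (C : ℝ) (hh : MemLp h p μ)
    (hQ : ∀ k ≤ n, AEStronglyMeasurable (Q k) μ)
    (hle : ∀ k ≤ n, ∀ᵐ z ∂μ, ‖Q k z‖ ≤ ‖h z + C * ∑ i ∈ Ioc k n, Q i z‖) :
    ∀ k ≤ n, MemLp (Q k) p μ := by
  intro k hk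
  induction hd : n - k using Nat.strong_induction_on generalizing k with
  | _ d ih =>
    have hsum : MemLp (fun z => ∑ i ∈ Ioc k n, Q i z) p μ :=
      memLp_finsetSum _ fun i hi => ih (n - i) (by grind) i (mem_Ioc.1 hi).2 rfl
    exact (hh.add (hsum.const_mul C)).of_le (hQ k hk) (hle k hk)

theorem iteratedDeriv_pow_sub_mul_self {𝕜 : Type*} [NontriviallyNormedField 𝕜] {b : 𝕜}
    {r : 𝕜 → 𝕜} {i m : ℕ} (hr : ContDiffAt 𝕜 i r b) (him : i ≤ m) :
    iteratedDeriv i (fun w => (w - b) ^ m * r w) b = if i = m then (m ! : 𝕜) * r b else 0 := by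
  have hpow : ∀ j, iteratedDeriv j (fun w => (w - b) ^ m) b = if j = m then (m ! : 𝕜) else 0 := by
    intro j
    simp only [iteratedDeriv_comp_sub_const j (· ^ m) b, sub_self, iteratedDeriv_fun_pow_zero]
    split_ifs <;> simp
  rw [iteratedDeriv_fun_mul (by fun_prop) hr, Finset.sum_eq_single i]
  · split_ifs with h <;> simp [hpow, h]
  · intro j hj hji
    have : j ≠ m := by grind
    simp [hpow, this]
  · simp

theorem Complex.sq_mem_slitPlane {z : ℂ} (hz : 0 < z.re) : z ^ 2 ∈ slitPlane := by
  rw [mem_slitPlane_iff, sq, mul_re, mul_im]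
  by_cases him : z.im = 0
  · left
    simp only [him, mul_zero, sub_zero]
    positivity
  · right
    rw [mul_comm z.im, ← two_mul]
    exact mul_ne_zero two_ne_zero (mul_ne_zero hz.ne' him)

theorem Complex.ofReal_div_one_sub_sq_mem_slitPlane {c : ℂ} (hc : ‖c‖ < 1) {x : ℝ} (hx : 0 < x) :
    (x : ℂ) / (1 - c) ^ 2 ∈ slitPlane := by
  have hre : 0 < (1 - c).re := by simp only [sub_re, one_re]; linarith [re_le_norm c]
  have hinv : 0 < (1 - c)⁻¹.re := by
    rw [inv_re]
    exact div_pos hre (normSq_pos.2 fun h => by simp [h] at hre)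
  have hsq := sq_mem_slitPlane hinv
  rw [mem_slitPlane_iff] at hsq ⊢
  rw [div_eq_mul_inv, ← inv_pow, re_ofReal_mul, im_ofReal_mul]
  exact hsq.imp (mul_pos hx) (mul_ne_zero hx.ne')

namespace UnitDisc

-- `kernelPower γ a` and `mobius a` are the paper's `f_a` and `σ_a`.
noncomputable def mobius (a w : ℂ) : ℂ := (a - w) / (1 - conj a * w)

noncomputable def kernelPower (γ : ℝ) (a w : ℂ) : ℂ :=
  (((1 : ℂ) - (‖a‖ : ℂ) ^ 2) / (1 - conj a * w) ^ 2) ^ (γ : ℂ)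

noncomputable def testFunction (γ : ℝ) (k : ℕ) (a w : ℂ) : ℂ := kernelPower γ a w * mobius a w ^ k

variable {a w : ℂ}

theorem norm_conj_mul_lt_one (ha : a ∈ ball (0 : ℂ) 1) (hw : w ∈ ball (0 : ℂ) 1) :
    ‖conj a * w‖ < 1 := by
  rw [mem_ball_zero_iff] at ha hw
  rw [norm_mul, Complex.norm_conj]
  nlinarith [norm_nonneg a, norm_nonneg w]

theorem one_sub_conj_mul_ne_zero (ha : a ∈ ball (0 : ℂ) 1) (hw : w ∈ ball (0 : ℂ) 1) :
    1 - conj a * w ≠ 0 :=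
  sub_ne_zero.2 fun h => by simpa [← h] using norm_conj_mul_lt_one ha hw

theorem one_sub_norm_sq_pos (ha : a ∈ ball (0 : ℂ) 1) : 0 < 1 - ‖a‖ ^ 2 := by
  rw [mem_ball_zero_iff] at ha
  nlinarith [norm_nonneg a]

theorem one_sub_norm_sq_div_mem_slitPlane (ha : a ∈ ball (0 : ℂ) 1) (hw : w ∈ ball (0 : ℂ) 1) :
    ((1 : ℂ) - (‖a‖ : ℂ) ^ 2) / (1 - conj a * w) ^ 2 ∈ Complex.slitPlane := by
  have := Complex.ofReal_div_one_sub_sq_mem_slitPlane (norm_conj_mul_lt_one ha hw)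
    (one_sub_norm_sq_pos ha)
  push_cast at this
  exact this

theorem continuousOn_testFunction (γ : ℝ) (k : ℕ) :
    ContinuousOn ↿(testFunction γ k) (ball (0 : ℂ) 1 ×ˢ ball (0 : ℂ) 1) := by
  rintro ⟨a, w⟩ ⟨ha, hw⟩
  have hden := one_sub_conj_mul_ne_zero ha hw
  have hden2 := pow_ne_zero 2 hden
  have hslit := one_sub_norm_sq_div_mem_slitPlane ha hw
  apply ContinuousAt.continuousWithinAt
  unfold testFunction kernelPower mobius
  fun_prop (disch := assumption)

theorem differentiableOn_kernelPower (γ : ℝ) (ha : a ∈ ball (0 : ℂ) 1) :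
    DifferentiableOn ℂ (kernelPower γ a) (ball (0 : ℂ) 1) := by
  intro w hw
  have hden2 := pow_ne_zero 2 (one_sub_conj_mul_ne_zero ha hw)
  have hslit := one_sub_norm_sq_div_mem_slitPlane ha hw
  apply DifferentiableAt.differentiableWithinAt
  unfold kernelPower
  fun_prop (disch := assumption)

theorem differentiableOn_testFunction (γ : ℝ) (k : ℕ) (ha : a ∈ ball (0 : ℂ) 1) :
    DifferentiableOn ℂ (testFunction γ k a) (ball (0 : ℂ) 1) := by
  have hden : ∀ w ∈ ball (0 : ℂ) 1, 1 - conj a * w ≠ 0 := fun w hw =>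
    one_sub_conj_mul_ne_zero ha hw
  exact (differentiableOn_kernelPower γ ha).mul (by unfold mobius; fun_prop (disch := assumption))

theorem testFunction_eq_pow_sub_mul (γ : ℝ) (k : ℕ) (a w : ℂ) :
    testFunction γ k a w = (w - a) ^ k * (kernelPower γ a w * (-(1 - conj a * w)⁻¹) ^ k) := by
  rw [testFunction, mobius, div_eq_mul_inv, mul_left_comm, ← mul_pow]
  ring

theorem one_sub_conj_mul_self (a : ℂ) : 1 - conj a * a = ((1 - ‖a‖ ^ 2 : ℝ) : ℂ) := by
  rw [mul_comm, Complex.mul_conj, Complex.normSq_eq_norm_sq]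
  push_cast
  ring

theorem norm_kernelPower_self (γ : ℝ) (ha : a ∈ ball (0 : ℂ) 1) :
    ‖kernelPower γ a a‖ = (1 - ‖a‖ ^ 2)⁻¹ ^ γ := by
  have hx := one_sub_norm_sq_pos ha
  have hbase : ((1 : ℂ) - (‖a‖ : ℂ) ^ 2) / (1 - conj a * a) ^ 2 = (((1 - ‖a‖ ^ 2)⁻¹ : ℝ) : ℂ) := by
    rw [one_sub_conj_mul_self]
    push_cast
    field_simp
  rw [kernelPower, hbase, Complex.norm_cpow_eq_rpow_re_of_pos (inv_pos.2 hx), Complex.ofReal_re]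

theorem iteratedDeriv_testFunction_self {γ : ℝ} {i k : ℕ} (ha : a ∈ ball (0 : ℂ) 1) (hik : i ≤ k) :
    iteratedDeriv i (testFunction γ k a) a =
      if i = k then (k ! : ℂ) * (kernelPower γ a a * (-(1 - conj a * a)⁻¹) ^ k) else 0 := by
  have hr : DifferentiableOn ℂ (fun w => kernelPower γ a w * (-(1 - conj a * w)⁻¹) ^ k)
      (ball (0 : ℂ) 1) := by
    have hden : ∀ w ∈ ball (0 : ℂ) 1, 1 - conj a * w ≠ 0 := fun w hw =>
      one_sub_conj_mul_ne_zero ha hw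
    exact (differentiableOn_kernelPower γ ha).mul (by fun_prop (disch := assumption))
  rw [funext (testFunction_eq_pow_sub_mul γ k a)]
  exact iteratedDeriv_pow_sub_mul_self
    ((hr.contDiffOn isOpen_ball).contDiffAt (isOpen_ball.mem_nhds ha)) hik

theorem norm_iteratedDeriv_testFunction_self (γ : ℝ) (k : ℕ) (ha : a ∈ ball (0 : ℂ) 1) :
    ‖iteratedDeriv k (testFunction γ k a) a‖ = k ! / (1 - ‖a‖ ^ 2) ^ ((k : ℝ) + γ) := by
  have hx := one_sub_norm_sq_pos ha
  rw [iteratedDeriv_testFunction_self ha le_rfl, if_pos rfl, norm_mul, norm_mul, norm_pow,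
    norm_neg, norm_inv, norm_kernelPower_self γ ha, one_sub_conj_mul_self, Complex.norm_real,
    Real.norm_of_nonneg hx.le, Complex.norm_natCast, Real.rpow_add hx, Real.rpow_natCast,
    Real.inv_rpow hx.le]
  field_simp
  simp [hx.ne']

theorem continuousOn_iteratedDeriv_testFunction (γ : ℝ) (k i : ℕ) (hw : w ∈ ball (0 : ℂ) 1) :
    ContinuousOn (fun a => iteratedDeriv i (testFunction γ k a) w) (ball (0 : ℂ) 1) :=
  (continuousOn_testFunction γ k).continuousOn_iteratedDeriv_apply isOpen_ball
    (fun _ ha => differentiableOn_testFunction γ k ha) i hw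

theorem weight_le_of_norm_sum_le {u : ℕ → ℂ} {γ C H : ℝ} {k n : ℕ} (ha : a ∈ ball (0 : ℂ) 1)
    (hkn : k ≤ n)
    (hsum : ‖∑ i ∈ range (n + 1), u i * iteratedDeriv i (testFunction γ k a) a‖ ≤ H)
    (hderiv : ∀ i ∈ Ioc k n,
      ‖iteratedDeriv i (testFunction γ k a) a‖ ≤ C / (1 - ‖a‖ ^ 2) ^ ((i : ℝ) + γ)) :
    ‖u k‖ / (1 - ‖a‖ ^ 2) ^ ((k : ℝ) + γ) ≤
      H + C * ∑ i ∈ Ioc k n, ‖u i‖ / (1 - ‖a‖ ^ 2) ^ ((i : ℝ) + γ) := by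
  have key := norm_mul_le_of_eq_zero_of_lt (u := u) hkn
    (fun i hi => (iteratedDeriv_testFunction_self ha hi.le).trans (if_neg hi.ne)) hderiv
  rw [norm_mul, norm_iteratedDeriv_testFunction_self γ k ha] at key
  have hw : 0 ≤ ‖u k‖ / (1 - ‖a‖ ^ 2) ^ ((k : ℝ) + γ) :=
    div_nonneg (norm_nonneg _) (Real.rpow_nonneg (one_sub_norm_sq_pos ha).le _)
  calc ‖u k‖ / (1 - ‖a‖ ^ 2) ^ ((k : ℝ) + γ)
      ≤ (k ! : ℝ) * (‖u k‖ / (1 - ‖a‖ ^ 2) ^ ((k : ℝ) + γ)) :=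
        le_mul_of_one_le_left hw (mod_cast Nat.one_le_iff_ne_zero.2 k.factorial_ne_zero)
    _ = ‖u k‖ * (k ! / (1 - ‖a‖ ^ 2) ^ ((k : ℝ) + γ)) := by ring
    _ ≤ _ := by
        refine key.trans (add_le_add hsum ?_)
        rw [mul_sum]
        exact (sum_congr rfl fun i _ => by ring).le

theorem aestronglyMeasurable_weight {μ : Measure ℂ} (hμ : ∀ᵐ z ∂μ, z ∈ ball (0 : ℂ) 1)
    {v τ : ℂ → ℂ} (hv : ContinuousOn v (ball (0 : ℂ) 1)) (hτ : ContinuousOn τ (ball (0 : ℂ) 1))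
    (hτmap : ∀ z ∈ ball (0 : ℂ) 1, τ z ∈ ball (0 : ℂ) 1) (s : ℝ) :
    AEStronglyMeasurable (fun z => ‖v z‖ / (1 - ‖τ z‖ ^ 2) ^ s) μ := by
  rw [← Measure.restrict_eq_self_of_ae_mem hμ]
  refine ContinuousOn.aestronglyMeasurable ?_ measurableSet_ball
  have hpos : ∀ z ∈ ball (0 : ℂ) 1, 0 < 1 - ‖τ z‖ ^ 2 := fun z hz =>
    one_sub_norm_sq_pos (hτmap z hz)
  exact hv.norm.div ((continuousOn_const.sub (hτ.norm.pow 2)).rpow_const fun z hz =>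
    Or.inl (hpos z hz).ne') fun z hz => (Real.rpow_pos_of_pos (hpos z hz) s).ne'

end UnitDisc

open UnitDisc

theorem stmt_15_general (n : ℕ) (τ : ℂ → ℂ) (u : ℕ → ℂ → ℂ) (γ C : ℝ)
    (μ : Measure ℂ) (hμ : μ (ball (0 : ℂ) 1)ᶜ = 0) (q : ℝ)
    (hτ : DifferentiableOn ℂ τ (ball (0 : ℂ) 1))
    (hτmap : ∀ z ∈ ball (0 : ℂ) 1, τ z ∈ ball (0 : ℂ) 1)
    (hu : ∀ k ≤ n, DifferentiableOn ℂ (u k) (ball (0 : ℂ) 1))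
    (g : ℂ → ℕ → ℂ → ℂ)
    (hg : ∀ a ∈ ball (0 : ℂ) 1, ∀ k ≤ n, ∀ w : ℂ,
      g a k w = (((1 : ℂ) - (‖a‖ : ℂ) ^ 2) / (1 - conj a * w) ^ 2) ^ (γ : ℂ) *
        ((a - w) / (1 - conj a * w)) ^ k)
    (h : ℂ → ℝ) (hh : MemLp h (ENNReal.ofReal q) μ)
    (hdom : ∀ a ∈ ball (0 : ℂ) 1, ∀ k ≤ n,
      ∀ᵐ z ∂μ, ‖∑ i ∈ range (n + 1), u i z * iteratedDeriv i (g a k) (τ z)‖ ≤ h z)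
    (hderiv : ∀ a ∈ ball (0 : ℂ) 1, ∀ k ≤ n, ∀ i ≤ n, ∀ w ∈ ball (0 : ℂ) 1,
      ‖iteratedDeriv i (g a k) w‖ ≤ C / (1 - ‖w‖ ^ 2) ^ ((i : ℝ) + γ)) :
    ∀ k ≤ n,
      MemLp (fun z : ℂ =>
          ‖u k z‖ / (1 - ‖τ z‖ ^ 2) ^ ((k : ℝ) + γ))
        (ENNReal.ofReal q) μ := by
  have hball : ∀ᵐ z ∂μ, z ∈ ball (0 : ℂ) 1 := by
    simpa using measure_eq_zero_iff_ae_notMem.1 hμ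
  have hgT : ∀ a ∈ ball (0 : ℂ) 1, ∀ k ≤ n, g a k = testFunction γ k a := fun a ha k hk =>
    funext (hg a ha k hk)
  refine memLp_of_norm_le_norm_add_sum_Ioc C hh (fun k hk => aestronglyMeasurable_weight hball
    (hu k hk).continuousOn hτ.continuousOn hτmap _) fun k hk => ?_
  have hdomT : ∀ᵐ z ∂μ, ∀ a ∈ ball (0 : ℂ) 1,
      ‖∑ i ∈ range (n + 1), u i z * iteratedDeriv i (testFunction γ k a) (τ z)‖ ≤ h z := by
    refine ae_forall_le_of_continuousOn (hball.mono fun z hz => ?_) fun a ha => by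
      simpa only [hgT a ha k hk] using hdom a ha k hk
    exact (continuousOn_finsetSum _ fun i _ => continuousOn_const.mul
      (continuousOn_iteratedDeriv_testFunction γ k i (hτmap z hz))).norm
  filter_upwards [hball, hdomT] with z hz hzdom
  have hτz := hτmap z hz
  have hQ := weight_le_of_norm_sum_le hτz hk (hzdom _ hτz) fun i hi => by
    simpa only [hgT _ hτz k hk] using hderiv _ hτz k hk i (mem_Ioc.1 hi).2 _ hτz
  rw [Real.norm_of_nonneg (div_nonneg (norm_nonneg _)
    (Real.rpow_nonneg (one_sub_norm_sq_pos hτz).le _))]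
  exact hQ.trans (le_abs_self _)

/-- If the images of the test functions `f_a σ_a^k` under `S^n_{u,τ}` are dominated by a
single `L^q(μ)` function, then each weight quotient `Q_k` belongs to `L^q(μ)`. -/
theorem stmt_15 (n : ℕ) (hn : 1 ≤ n) (τ : ℂ → ℂ) (u : ℕ → ℂ → ℂ) (γ C : ℝ)
    (hγ : 0 ≤ γ) (hC : 0 < C)
    (μ : Measure ℂ) (hμ : μ (ball (0 : ℂ) 1)ᶜ = 0) (q : ℝ) (hq : 0 < q)
    (hτ : DifferentiableOn ℂ τ (ball (0 : ℂ) 1))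
    (hτmap : ∀ z ∈ ball (0 : ℂ) 1, τ z ∈ ball (0 : ℂ) 1)
    (hu : ∀ k ≤ n, DifferentiableOn ℂ (u k) (ball (0 : ℂ) 1))
    (g : ℂ → ℕ → ℂ → ℂ)
    (hg : ∀ a ∈ ball (0 : ℂ) 1, ∀ k ≤ n, ∀ w : ℂ,
      g a k w = (((1 : ℂ) - (‖a‖ : ℂ) ^ 2) / (1 - conj a * w) ^ 2) ^ (γ : ℂ) *
        ((a - w) / (1 - conj a * w)) ^ k)
    (h : ℂ → ℝ) (hh : MemLp h (ENNReal.ofReal q) μ)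
    (hdom : ∀ a ∈ ball (0 : ℂ) 1, ∀ k ≤ n,
      ∀ᵐ z ∂μ, ‖∑ i ∈ range (n + 1), u i z * iteratedDeriv i (g a k) (τ z)‖ ≤ h z)
    (hderiv : ∀ a ∈ ball (0 : ℂ) 1, ∀ k ≤ n, ∀ i ≤ n, ∀ w ∈ ball (0 : ℂ) 1,
      ‖iteratedDeriv i (g a k) w‖ ≤ C / (1 - ‖w‖ ^ 2) ^ ((i : ℝ) + γ)) :
    ∀ k ≤ n,
      MemLp (fun z : ℂ =>
          ‖u k z‖ / (1 - ‖τ z‖ ^ 2) ^ ((k : ℝ) + γ))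
        (ENNReal.ofReal q) μ :=
  stmt_15_general n τ u γ C μ hμ q hτ hτmap hu g hg h hh hdom hderiv
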